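/- Let r > 1 and let G be a weighted directed graph on a finite vertex set V with |V| = N ≥ 2, given by a weight function w : V × V → ℝ≥0 with W(u) := Σ_v w(u,v) > 0 for every u, such that the digraph with edge set {(u,v) : w(u,v) > 0} is strongly connected. Let ρ and T be the fixation-probability and absorption-time solutions of the Moran-process linear systems on configurations, and set p̄ = (1/N)·Σ_{v∈V} ρ({v}) and T̄ = (1/N)·Σ_{v∈V} T({v}). If p̄ ≥ 1 − 1/r (in particular, if G is an amplifier of selection), then T̄ ≥ ((r−1)/r²)·N·log N. -/

import Mathlib

open Finset

/-- One-step probability of gaining a mutant at vertex `v ∉ X` in the Moran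
birth–death process with mutant fitness `r` on the weighted digraph `w`,
from the configuration `X` of mutant vertices. -/
noncomputable def moranUp {V : Type*} [Fintype V] [DecidableEq V]
    (r : ℝ) (w : V → V → ℝ) (X : Finset V) (v : V) : ℝ :=
  ∑ u ∈ X, (r / ((Fintype.card V : ℝ) + (r - 1) * X.card)) * (w u v / ∑ x : V, w u x)

/-- One-step probability of losing the mutant at vertex `v ∈ X`. -/
noncomputable def moranDown {V : Type*} [Fintype V] [DecidableEq V]
    (r : ℝ) (w : V → V → ℝ) (X : Finset V) (v : V) : ℝ :=
  ∑ u ∈ Xᶜ, (1 / ((Fintype.card V : ℝ) + (r - 1) * X.card)) * (w u v / ∑ x : V, w u x)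

/-- `ρ` is the fixation-probability solution of the Moran-process linear system. -/
def IsMoranFixationSol {V : Type*} [Fintype V] [DecidableEq V]
    (r : ℝ) (w : V → V → ℝ) (ρ : Finset V → ℝ) : Prop :=
  ρ ∅ = 0 ∧ ρ Finset.univ = 1 ∧
  ∀ X : Finset V, X ≠ ∅ → X ≠ Finset.univ →
    ρ X = (∑ v ∈ Xᶜ, moranUp r w X v * ρ (insert v X))
        + (∑ v ∈ X, moranDown r w X v * ρ (X.erase v))
        + (1 - (∑ v ∈ Xᶜ, moranUp r w X v) - (∑ v ∈ X, moranDown r w X v)) * ρ X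

/-- `T` is the absorption-time solution of the Moran-process linear system. -/
def IsMoranAbsorptionSol {V : Type*} [Fintype V] [DecidableEq V]
    (r : ℝ) (w : V → V → ℝ) (T : Finset V → ℝ) : Prop :=
  T ∅ = 0 ∧ T Finset.univ = 0 ∧
  ∀ X : Finset V, X ≠ ∅ → X ≠ Finset.univ →
    T X = 1 + (∑ v ∈ Xᶜ, moranUp r w X v * T (insert v X))
        + (∑ v ∈ X, moranDown r w X v * T (X.erase v))
        + (1 - (∑ v ∈ Xᶜ, moranUp r w X v) - (∑ v ∈ X, moranDown r w X v)) * T X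

/-!
The argument compares `T` with `ψ(X) = Λ(N) ρ(X) − Λ(|X|)`, where `Λ(k) = Σ_{1 ≤ j < k} Δ_j`
and `Δ_j = F(j) / (r j)`. A configuration of size `k` grows in one step with probability at most
`r k / F(k) = 1 / Δ_k`, and `ρ` has zero drift, so the one-step drift of `ψ` is at least `−1`,
which is the drift of `T`. Hence `ψ − T` is subharmonic; it vanishes at `∅` and `V`, and strong
connectivity gives a maximum principle, so `ψ ≤ T`. At singletons this is
`T({v}) ≥ Λ(N) ρ({v})`; averaging, `T̄ ≥ Λ(N) p̄ ≥ (N / r) log N · (1 − 1/r)`.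
-/

theorem Relation.ReflTransGen.exists_mem_notMem_rel {α : Type*} {e : α → α → Prop} {s : Set α}
    {a b : α} (h : Relation.ReflTransGen e a b) (ha : a ∈ s) (hb : b ∉ s) :
    ∃ x ∈ s, ∃ y ∉ s, e x y := by
  induction h with
  | refl => exact absurd ha hb
  | @tail c d _ hcd ih =>
    by_cases hc : c ∈ s
    · exact ⟨c, hc, d, hb, hcd⟩
    · exact ih hc

theorem Real.log_le_sum_Ico_inv (n : ℕ) : Real.log n ≤ ∑ j ∈ Ico 1 n, (j : ℝ)⁻¹ := by
  cases n with
  | zero => simp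
  | succ n =>
    simpa [harmonic, sum_Ico_eq_sum_range, add_comm] using log_add_one_le_harmonic n

section MoranChain

variable {V : Type*} [Fintype V] {r : ℝ} {w : V → V → ℝ}

lemma moran_fitness_nonneg (hr : 0 < r) (X : Finset V) :
    0 ≤ (Fintype.card V : ℝ) + (r - 1) * X.card := by
  have hX : (X.card : ℝ) ≤ Fintype.card V := by exact_mod_cast card_le_univ X
  nlinarith [Nat.cast_nonneg (α := ℝ) X.card]

lemma moran_fitness_pos (hr : 0 < r) {X : Finset V} (hX : X.Nonempty) :
    0 < (Fintype.card V : ℝ) + (r - 1) * X.card := by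
  have hX' : (X.card : ℝ) ≤ Fintype.card V := by exact_mod_cast card_le_univ X
  have hk : (0 : ℝ) < X.card := by exact_mod_cast hX.card_pos
  nlinarith

variable [DecidableEq V]

lemma moranUp_nonneg (hr : 0 < r) (hw : ∀ u v, 0 ≤ w u v) (X : Finset V) (v : V) :
    0 ≤ moranUp r w X v :=
  sum_nonneg fun u _ => mul_nonneg (div_nonneg hr.le (moran_fitness_nonneg hr X))
    (div_nonneg (hw u v) (sum_nonneg fun x _ => hw u x))

lemma moranDown_nonneg (hr : 0 < r) (hw : ∀ u v, 0 ≤ w u v) (X : Finset V) (v : V) :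
    0 ≤ moranDown r w X v :=
  sum_nonneg fun u _ => mul_nonneg (div_nonneg zero_le_one (moran_fitness_nonneg hr X))
    (div_nonneg (hw u v) (sum_nonneg fun x _ => hw u x))

lemma moranUp_pos (hr : 0 < r) (hw : ∀ u v, 0 ≤ w u v) {X : Finset V} {x y : V} (hx : x ∈ X)
    (hxy : 0 < w x y) : 0 < moranUp r w X y := by
  have hW : 0 < ∑ z, w x z := hxy.trans_le (single_le_sum (fun z _ => hw x z) (mem_univ y))
  refine sum_pos' (fun u _ => ?_) ⟨x, hx, ?_⟩
  · exact mul_nonneg (div_nonneg hr.le (moran_fitness_nonneg hr X))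
      (div_nonneg (hw u y) (sum_nonneg fun z _ => hw u z))
  · exact mul_pos (div_pos hr (moran_fitness_pos hr ⟨x, hx⟩)) (div_pos hxy hW)

lemma sum_moranUp_le (hr : 0 < r) (hw : ∀ u v, 0 ≤ w u v) (X : Finset V) :
    ∑ v ∈ Xᶜ, moranUp r w X v ≤ X.card * (r / ((Fintype.card V : ℝ) + (r - 1) * X.card)) := by
  unfold moranUp
  rw [sum_comm, ← nsmul_eq_mul]
  refine sum_le_card_nsmul _ _ _ fun x _ => ?_
  rw [← mul_sum, ← sum_div]
  refine mul_le_of_le_one_right (div_nonneg hr.le (moran_fitness_nonneg hr X)) ?_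
  exact div_le_one_of_le₀ (sum_le_univ_sum_of_nonneg (hw x)) (sum_nonneg fun z _ => hw x z)

noncomputable def moranDrift (r : ℝ) (w : V → V → ℝ) (f : Finset V → ℝ) (X : Finset V) : ℝ :=
  ∑ v ∈ Xᶜ, moranUp r w X v * (f (insert v X) - f X)
    + ∑ v ∈ X, moranDown r w X v * (f (X.erase v) - f X)

lemma moran_expectation_eq_add_moranDrift (f : Finset V → ℝ) (X : Finset V) :
    (∑ v ∈ Xᶜ, moranUp r w X v * f (insert v X)) + (∑ v ∈ X, moranDown r w X v * f (X.erase v))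
        + (1 - (∑ v ∈ Xᶜ, moranUp r w X v) - (∑ v ∈ X, moranDown r w X v)) * f X
      = f X + moranDrift r w f X := by
  simp only [moranDrift, mul_sub, sum_sub_distrib, ← sum_mul]
  ring

lemma moranDrift_sub (f g : Finset V → ℝ) (X : Finset V) :
    moranDrift r w (fun Y => f Y - g Y) X = moranDrift r w f X - moranDrift r w g X := by
  simp only [moranDrift, mul_sub, sum_sub_distrib]
  ring

lemma moranDrift_const_mul (c : ℝ) (f : Finset V → ℝ) (X : Finset V) :
    moranDrift r w (fun Y => c * f Y) X = c * moranDrift r w f X := by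
  simp only [moranDrift, ← mul_sub, mul_left_comm _ c, ← mul_sum, mul_add]

lemma moranDrift_comp_card (g : ℕ → ℝ) (X : Finset V) :
    moranDrift r w (fun Y => g Y.card) X
      = (∑ v ∈ Xᶜ, moranUp r w X v) * (g (X.card + 1) - g X.card)
        + (∑ v ∈ X, moranDown r w X v) * (g (X.card - 1) - g X.card) := by
  simp only [moranDrift, sum_mul]
  congr 1
  · exact sum_congr rfl fun v hv => by rw [card_insert_of_notMem (mem_compl.1 hv)]
  · exact sum_congr rfl fun v hv => by rw [card_erase_of_mem hv]

lemma IsMoranFixationSol.moranDrift_eq_zero {ρ : Finset V → ℝ} (hρ : IsMoranFixationSol r w ρ)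
    {X : Finset V} (hX : X ≠ ∅) (hX' : X ≠ univ) : moranDrift r w ρ X = 0 := by
  have h := hρ.2.2 X hX hX'
  rw [moran_expectation_eq_add_moranDrift] at h
  linarith

lemma IsMoranAbsorptionSol.moranDrift_eq_neg_one {T : Finset V → ℝ}
    (hT : IsMoranAbsorptionSol r w T) {X : Finset V} (hX : X ≠ ∅) (hX' : X ≠ univ) :
    moranDrift r w T X = -1 := by
  linarith [hT.2.2 X hX hX', moran_expectation_eq_add_moranDrift (r := r) (w := w) T X]

/-- A maximiser of `D` of largest size that is neither `∅` nor `univ` has an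
edge leaving it; moving along that edge strictly decreases `D`, so the drift there is negative. -/
theorem nonpos_of_moranDrift_nonneg (hr : 0 < r) (hw : ∀ u v, 0 ≤ w u v)
    (hconn : ∀ u v : V, Relation.ReflTransGen (fun a b : V => 0 < w a b) u v)
    {D : Finset V → ℝ} (hempty : D ∅ ≤ 0) (huniv : D univ ≤ 0)
    (hD : ∀ X : Finset V, X ≠ ∅ → X ≠ univ → 0 ≤ moranDrift r w D X) (X : Finset V) :
    D X ≤ 0 := by
  obtain ⟨X₀, -, hX₀⟩ :=
    exists_max_image (univ : Finset (Finset V)) (fun Y => toLex (D Y, Y.card)) univ_nonempty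
  have hmax : ∀ Y, D Y ≤ D X₀ ∧ (D Y = D X₀ → Y.card ≤ X₀.card) := fun Y => by
    have h := hX₀ Y (mem_univ Y)
    rw [Prod.Lex.le_iff] at h
    rcases h with h | ⟨h, h'⟩
    · exact ⟨h.le, fun h'' => absurd h'' h.ne⟩
    · exact ⟨h.le, fun _ => h'⟩
  refine (hmax X).1.trans ?_
  rcases eq_or_ne X₀ ∅ with rfl | hne
  · exact hempty
  rcases eq_or_ne X₀ univ with rfl | hnu
  · exact huniv
  exfalso
  obtain ⟨a, ha⟩ := nonempty_iff_ne_empty.2 hne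
  obtain ⟨b, hb⟩ : ∃ b, b ∉ X₀ := by simpa [eq_univ_iff_forall] using hnu
  obtain ⟨x, hx, y, hy, hxy⟩ := (hconn a b).exists_mem_notMem_rel (s := ↑X₀) ha hb
  have hlt : D (insert y X₀) < D X₀ := (hmax _).1.lt_of_ne fun h => by
    have := (hmax _).2 h
    rw [card_insert_of_notMem hy] at this
    omega
  have hup : ∑ v ∈ X₀ᶜ, moranUp r w X₀ v * (D (insert v X₀) - D X₀) < 0 :=
    sum_neg' (fun v _ => mul_nonpos_of_nonneg_of_nonpos (moranUp_nonneg hr hw X₀ v)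
        (sub_nonpos.2 (hmax _).1))
      ⟨y, mem_compl.2 hy, mul_neg_of_pos_of_neg (moranUp_pos hr hw hx hxy) (sub_neg.2 hlt)⟩
  have hdown : ∑ v ∈ X₀, moranDown r w X₀ v * (D (X₀.erase v) - D X₀) ≤ 0 :=
    sum_nonpos fun v _ => mul_nonpos_of_nonneg_of_nonpos (moranDown_nonneg hr hw X₀ v)
      (sub_nonpos.2 (hmax _).1)
  have := hD X₀ hne hnu
  rw [moranDrift] at this
  linarith

end MoranChain

/-- `r j / F(j)` bounds the probability that a configuration of size `j` grows, where
`F(j) = N + (r - 1) j` is the total fitness; this is its reciprocal. -/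
noncomputable def moranIncrement (N : ℕ) (r : ℝ) (j : ℕ) : ℝ := ((N : ℝ) + (r - 1) * j) / (r * j)

noncomputable def moranPotential (N : ℕ) (r : ℝ) (k : ℕ) : ℝ :=
  ∑ j ∈ Ico 1 k, moranIncrement N r j

section MoranPotential

variable {N : ℕ} {r : ℝ}

lemma moranIncrement_nonneg (hr : 1 ≤ r) (j : ℕ) : 0 ≤ moranIncrement N r j := by
  unfold moranIncrement
  have : 0 ≤ r - 1 := sub_nonneg.2 hr
  positivity

lemma div_mul_inv_le_moranIncrement (hr : 1 ≤ r) (j : ℕ) :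
    N / r * (j : ℝ)⁻¹ ≤ moranIncrement N r j := by
  rw [moranIncrement, ← div_eq_mul_inv, div_div]
  have : 0 ≤ r - 1 := sub_nonneg.2 hr
  have : 0 ≤ r := by linarith
  gcongr
  exact le_add_of_nonneg_right (by positivity)

lemma moranPotential_nonneg (hr : 1 ≤ r) (k : ℕ) : 0 ≤ moranPotential N r k :=
  sum_nonneg fun j _ => moranIncrement_nonneg hr j

lemma moranPotential_mono (hr : 1 ≤ r) : Monotone (moranPotential N r) := fun _ _ hab =>
  sum_le_sum_of_subset_of_nonneg (Ico_subset_Ico_right hab) fun j _ _ =>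
    moranIncrement_nonneg hr j

lemma moranPotential_one : moranPotential N r 1 = 0 := by
  simp [moranPotential]

lemma moranPotential_succ {k : ℕ} (hk : 1 ≤ k) :
    moranPotential N r (k + 1) = moranPotential N r k + moranIncrement N r k :=
  sum_Ico_succ_top hk _

lemma div_mul_log_le_moranPotential (hr : 1 ≤ r) :
    N / r * Real.log N ≤ moranPotential N r N :=
  calc N / r * Real.log N ≤ N / r * ∑ j ∈ Ico 1 N, (j : ℝ)⁻¹ :=
        mul_le_mul_of_nonneg_left (Real.log_le_sum_Ico_inv N) (by positivity)
    _ ≤ moranPotential N r N := by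
        rw [mul_sum]
        exact sum_le_sum fun j _ => div_mul_inv_le_moranIncrement hr j

end MoranPotential

section MoranComparison

variable {V : Type*} [Fintype V] [DecidableEq V] {r : ℝ} {w : V → V → ℝ}

lemma sum_moranUp_mul_moranIncrement_le_one (hr : 1 ≤ r) (hw : ∀ u v, 0 ≤ w u v)
    {X : Finset V} (hX : X.Nonempty) :
    (∑ v ∈ Xᶜ, moranUp r w X v) * moranIncrement (Fintype.card V) r X.card ≤ 1 := by
  have hr0 : 0 < r := zero_lt_one.trans_le hr
  have hF := moran_fitness_pos hr0 hX
  have hk : (0 : ℝ) < X.card := by exact_mod_cast hX.card_pos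
  calc (∑ v ∈ Xᶜ, moranUp r w X v) * moranIncrement (Fintype.card V) r X.card
      ≤ X.card * (r / ((Fintype.card V : ℝ) + (r - 1) * X.card))
          * moranIncrement (Fintype.card V) r X.card :=
        mul_le_mul_of_nonneg_right (sum_moranUp_le hr0 hw X) (moranIncrement_nonneg hr _)
    _ = 1 := by
        rw [moranIncrement]
        field_simp
        exact div_self (by linarith)

lemma neg_one_le_moranDrift_potential (hr : 1 ≤ r) (hw : ∀ u v, 0 ≤ w u v)
    {ρ : Finset V → ℝ} (hρ : IsMoranFixationSol r w ρ) {X : Finset V} (hX : X ≠ ∅)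
    (hX' : X ≠ univ) :
    -1 ≤ moranDrift r w (fun Y => moranPotential (Fintype.card V) r (Fintype.card V) * ρ Y
      - moranPotential (Fintype.card V) r Y.card) X := by
  have hne : X.Nonempty := nonempty_iff_ne_empty.2 hX
  have hgrow := sum_moranUp_mul_moranIncrement_le_one hr hw hne
  have hshrink : 0 ≤ (∑ v ∈ X, moranDown r w X v) * (moranPotential (Fintype.card V) r X.card
      - moranPotential (Fintype.card V) r (X.card - 1)) :=
    mul_nonneg (sum_nonneg fun v _ => moranDown_nonneg (zero_lt_one.trans_le hr) hw X v)
      (sub_nonneg.2 (moranPotential_mono hr (Nat.sub_le _ 1)))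
  rw [moranDrift_sub, moranDrift_const_mul, hρ.moranDrift_eq_zero hX hX',
    moranDrift_comp_card, moranPotential_succ hne.card_pos]
  linarith

theorem moranPotential_mul_sub_le_absorption (hr : 1 ≤ r) (hw : ∀ u v, 0 ≤ w u v)
    (hconn : ∀ u v : V, Relation.ReflTransGen (fun a b : V => 0 < w a b) u v)
    {ρ T : Finset V → ℝ} (hρ : IsMoranFixationSol r w ρ) (hT : IsMoranAbsorptionSol r w T)
    (X : Finset V) :
    moranPotential (Fintype.card V) r (Fintype.card V) * ρ X
      - moranPotential (Fintype.card V) r X.card ≤ T X := by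
  refine sub_nonpos.1 (nonpos_of_moranDrift_nonneg (zero_lt_one.trans_le hr) hw hconn
    (D := fun Y => (moranPotential (Fintype.card V) r (Fintype.card V) * ρ Y
      - moranPotential (Fintype.card V) r Y.card) - T Y) ?_ ?_ (fun Y hY hY' => ?_) X)
  · simp [hρ.1, hT.1, moranPotential]
  · simp [hρ.2.1, hT.2.1]
  · rw [moranDrift_sub, hT.moranDrift_eq_neg_one hY hY']
    linarith [neg_one_le_moranDrift_potential hr hw hρ hY hY']

end MoranComparison

theorem amplifier_absorption_time_lower_bound_general
    {V : Type*} [Fintype V] [DecidableEq V]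
    (N : ℕ) (hcard : Fintype.card V = N)
    (r : ℝ) (hr : 1 < r)
    (w : V → V → ℝ) (hw : ∀ u v : V, 0 ≤ w u v)
    (hconn : ∀ u v : V, Relation.ReflTransGen (fun a b : V => 0 < w a b) u v)
    (ρ T : Finset V → ℝ)
    (hρ : IsMoranFixationSol r w ρ)
    (hT : IsMoranAbsorptionSol r w T)
    (pbar Tbar : ℝ)
    (hpbar : pbar = (1 / (N : ℝ)) * ∑ v : V, ρ {v})
    (hTbar : Tbar = (1 / (N : ℝ)) * ∑ v : V, T {v})
    (hamp : pbar ≥ 1 - 1 / r) :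
    Tbar ≥ ((r - 1) / r ^ 2) * N * Real.log N := by
  subst hcard
  set Λ := moranPotential (Fintype.card V) r (Fintype.card V)
  have hsingleton (v : V) : Λ * ρ {v} ≤ T {v} := by
    simpa [moranPotential_one] using moranPotential_mul_sub_le_absorption hr.le hw hconn hρ hT {v}
  have hmean : Λ * pbar ≤ Tbar := by
    rw [hpbar, hTbar, mul_left_comm, mul_sum]
    gcongr with v
    exact hsingleton v
  have hr0 : 0 < r := zero_lt_one.trans hr
  calc ((r - 1) / r ^ 2) * Fintype.card V * Real.log (Fintype.card V)
      = Fintype.card V / r * Real.log (Fintype.card V) * (1 - 1 / r) := by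
        field_simp
    _ ≤ Λ * (1 - 1 / r) := by
        gcongr
        · exact sub_nonneg.2 ((div_le_one hr0).2 hr.le)
        · exact div_mul_log_le_moranPotential hr.le
    _ ≤ Λ * pbar := mul_le_mul_of_nonneg_left hamp (moranPotential_nonneg hr.le _)
    _ ≤ Tbar := hmean

/-- If the uniform-initialization fixation probability satisfies `p̄ ≥ 1 − 1/r`
(in particular, for any amplifier of selection), then the absorption time of a
uniformly placed single mutant is at least `((r−1)/r²)·N·log N`. -/
theorem amplifier_absorption_time_lower_bound
    {V : Type*} [Fintype V] [DecidableEq V]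
    (N : ℕ) (hN : 2 ≤ N) (hcard : Fintype.card V = N)
    (r : ℝ) (hr : 1 < r)
    (w : V → V → ℝ) (hw : ∀ u v : V, 0 ≤ w u v)
    (hW : ∀ u : V, 0 < ∑ x : V, w u x)
    (hconn : ∀ u v : V, Relation.ReflTransGen (fun a b : V => 0 < w a b) u v)
    (ρ T : Finset V → ℝ)
    (hρ : IsMoranFixationSol r w ρ)
    (hT : IsMoranAbsorptionSol r w T)
    (pbar Tbar : ℝ)
    (hpbar : pbar = (1 / (N : ℝ)) * ∑ v : V, ρ {v})
    (hTbar : Tbar = (1 / (N : ℝ)) * ∑ v : V, T {v})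
    (hamp : pbar ≥ 1 - 1 / r) :
    Tbar ≥ ((r - 1) / r ^ 2) * N * Real.log N :=
  amplifier_absorption_time_lower_bound_general N hcard r hr w hw hconn ρ T hρ hT pbar Tbar hpbar
    hTbar hamp
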